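/- Let R be a commutative unitary ring whose multiplicative semigroup has finite Erdős-Burgess constant I(S_R). Then either R is finite, or: the Jacobson radical J(R) is finite and R/J(R) is isomorphic as a ring to B × ∏_{i=1}^t F_{q_i}, where B is an infinite Boolean unitary ring, 0 ≤ t ≤ I(S_R) − 1, and q_1,...,q_t are prime powers with each q_i > 2. -/

import Mathlib

/-!
Finiteness of `EB R` bounds the length of sequences without an idempotent subproduct, and such
sequences lift along surjections and push forward along injections. In a group the only idempotent
is `1`, and an infinite group has sequences of every length with no subproduct equal to `1`; hence
the units of `R` are finite, and so are the Jacobson radical (`x ↦ 1 + x` maps it into the units)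
and every residue field (its units are finite).

If the residue fields `R ⧸ mᵢ` contain non-idempotents `cᵢ`, the Chinese remainder theorem gives
`uᵢ ≡ cᵢ mod mᵢ` and `uᵢ ≡ 1` modulo the other `mⱼ`; every nonempty subproduct of the `uᵢ` is then
`≡ cᵢ` modulo some `mᵢ`, so there are at most `EB R - 1` such maximal ideals. All other residue
fields are Boolean, so the intersection of their maximal ideals has a Boolean quotient `B`, and the
Chinese remainder theorem splits `R ⧸ J(R)` as `B × ∏ R ⧸ mᵢ`. If `B` were finite, so would be
`R ⧸ J(R)`, and with it `R`.
-/

/-- Product of the nonempty list `a :: l` in a semigroup. -/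
def sprod {α : Type*} [Mul α] (a : α) (l : List α) : α := l.foldl (· * ·) a

/-- A list is idempotent-product free if no nonempty sublist has idempotent product. -/
def IdemProdFree {α : Type*} [Mul α] (l : List α) : Prop :=
  ∀ (a : α) (t : List α), (a :: t).Sublist l → ¬ IsIdempotentElem (sprod a t)

/-- The Erdős–Burgess constant of a (commutative) semigroup, as an extended natural:
the supremum of `|T| + 1` over all idempotent-product free sequences `T`. -/
noncomputable def EB (α : Type*) [Mul α] : ℕ∞ :=
  ⨆ l ∈ {l : List α | IdemProdFree l}, ((l.length : ℕ∞) + 1)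

namespace ErdosBurgess

section Mul

variable {α β : Type*} [Mul α] [Mul β]

theorem map_sprod (f : α →ₙ* β) (a : α) (l : List α) :
    f (sprod a l) = sprod (f a) (l.map f) := by
  induction l generalizing a with
  | nil => rfl
  | cons b l ih => exact ih (a * b) |>.trans (by rw [map_mul]; rfl)

theorem IdemProdFree.map {l : List α} (hl : IdemProdFree l) {f : α →ₙ* β}
    (hf : Function.Injective f) : IdemProdFree (l.map f) := by
  intro b t hsub hidem
  obtain ⟨r, hr, hrt⟩ := List.sublist_map_iff.mp hsub
  obtain ⟨a, s, rfl⟩ := List.exists_cons_of_ne_nil (l := r) (by rintro rfl; simp at hrt)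
  obtain ⟨rfl, rfl⟩ := List.cons_eq_cons.mp (hrt.trans (List.map_cons ..))
  refine hl a s hr (hf ?_)
  rw [map_mul, map_sprod]
  exact hidem

theorem IdemProdFree.of_map {l : List α} {f : α →ₙ* β} (hl : IdemProdFree (l.map f)) :
    IdemProdFree l := fun a t hsub hidem =>
  hl (f a) (t.map f) (hsub.map f) (map_sprod f a t ▸ hidem.map f)

theorem length_add_one_le_EB {l : List α} (hl : IdemProdFree l) : (l.length : ℕ∞) + 1 ≤ EB α :=
  le_biSup (fun l : List α => (l.length : ℕ∞) + 1) hl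

theorem EB_le_of_injective {f : α →ₙ* β} (hf : Function.Injective f) : EB α ≤ EB β :=
  iSup₂_le fun l hl => by simpa using length_add_one_le_EB (IdemProdFree.map hl hf)

theorem EB_le_of_surjective {f : α →ₙ* β} (hf : Function.Surjective f) : EB β ≤ EB α :=
  iSup₂_le fun l hl => by
    obtain ⟨l, rfl⟩ := List.map_surjective_iff.mpr hf l
    simpa using length_add_one_le_EB (IdemProdFree.of_map hl)

theorem EB_eq_top_of_forall_exists (H : ∀ n : ℕ, ∃ l : List α, l.length = n ∧ IdemProdFree l) :
    EB α = ⊤ :=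
  ENat.eq_top_iff_forall_ge.mpr fun n => by
    obtain ⟨l, rfl, hl⟩ := H n
    exact le_trans le_self_add (length_add_one_le_EB hl)

end Mul

theorem sprod_eq_prod {M : Type*} [Monoid M] (a : M) (l : List M) : sprod a l = (a :: l).prod := by
  induction l generalizing a with
  | nil => simp [sprod]
  | cons b l ih => simp only [sprod, List.foldl_cons] at ih ⊢; rw [ih]; simp [mul_assoc]

section Group

variable {G : Type*} [Group G]

theorem idemProdFree_iff_prod_ne_one (l : List G) :
    IdemProdFree l ↔ ∀ a t, (a :: t).Sublist l → (a :: t).prod ≠ 1 := by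
  simp only [IdemProdFree, sprod_eq_prod, IsIdempotentElem.iff_eq_one]

theorem exists_idemProdFree_length_eq [Infinite G] (n : ℕ) :
    ∃ l : List G, l.length = n ∧ IdemProdFree l := by
  simp only [idemProdFree_iff_prod_ne_one]
  induction n with
  | zero => exact ⟨[], rfl, fun a t h => by simp at h⟩
  | succ n ih =>
    obtain ⟨l, rfl, hl⟩ := ih
    -- a new element `g` must avoid the inverses of the finitely many subproducts of `l`
    obtain ⟨g, hg⟩ := ((List.finite_toSet l.sublists).image fun s => s.prod⁻¹).exists_notMem
    refine ⟨g :: l, rfl, fun a t hsub hprod => ?_⟩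
    rcases List.sublist_cons_iff.mp hsub with hsub | ⟨r, heq, hr⟩
    · exact hl a t hsub hprod
    · rw [heq, List.prod_cons] at hprod
      exact hg ⟨r, List.mem_sublists.mpr hr, (eq_inv_of_mul_eq_one_left hprod).symm⟩

theorem EB_eq_top_of_infinite [Infinite G] : EB G = ⊤ :=
  EB_eq_top_of_forall_exists exists_idemProdFree_length_eq

end Group

theorem finite_units_of_EB_ne_top {M : Type*} [Monoid M] (h : EB M ≠ ⊤) : Finite Mˣ := by
  by_contra hinf
  have : Infinite Mˣ := not_finite_iff_infinite.mp hinf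
  exact h (top_le_iff.mp (EB_eq_top_of_infinite (G := Mˣ) ▸
    EB_le_of_injective (f := (Units.coeHom M).toMulHom) Units.val_injective))

theorem finite_of_EB_ne_top {K : Type*} [GroupWithZero K] (h : EB K ≠ ⊤) : Finite K := by
  classical
  have := finite_units_of_EB_ne_top h
  have : Finite (WithZero Kˣ) := inferInstanceAs (Finite (Option Kˣ))
  exact Finite.of_equiv _ WithZero.withZeroUnitsEquiv.toEquiv

theorem idemProdFree_map_toList {M ι : Type*} [CommMonoid M] [Fintype ι] (u : ι → M)
    (hu : ∀ s : Finset ι, s.Nonempty → ¬ IsIdempotentElem (∏ i ∈ s, u i)) :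
    IdemProdFree (Finset.univ.toList.map u) := by
  classical
  intro a t hsub
  obtain ⟨r, hr, hrt⟩ := List.sublist_map_iff.mp hsub
  rw [sprod_eq_prod, hrt, ← List.prod_toFinset u (hr.nodup (Finset.nodup_toList _))]
  exact hu _ (List.toFinset_nonempty_iff _ |>.mpr (by rintro rfl; simp at hrt))

section CommRing

variable {R : Type*} [CommRing R]

theorem finite_jacobson_bot_of_EB_ne_top (h : EB R ≠ ⊤) :
    Finite (Ideal.jacobson (⊥ : Ideal R)) := by
  have := finite_units_of_EB_ne_top h
  exact Finite.of_injective (fun x : Ideal.jacobson (⊥ : Ideal R) =>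
      (Ideal.isUnit_of_sub_one_mem_jacobson_bot (1 + (x : R)) (by simp)).unit)
    fun x y hxy => Subtype.ext (add_left_cancel (congrArg Units.val hxy))

theorem finite_quotient_of_EB_ne_top (h : EB R ≠ ⊤) (p : Ideal R) [p.IsMaximal] :
    Finite (R ⧸ p) := by
  let := Ideal.Quotient.field p
  exact finite_of_EB_ne_top <| ne_top_of_le_ne_top h <|
    EB_le_of_surjective (f := (Ideal.Quotient.mk p).toMonoidHom.toMulHom)
      Ideal.Quotient.mk_surjective

def HasBooleanQuotient (I : Ideal R) : Prop := ∀ x : R, x * x - x ∈ I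

theorem isIdempotentElem_mk_iff {I : Ideal R} {x : R} :
    IsIdempotentElem (Ideal.Quotient.mk I x) ↔ x * x - x ∈ I := by
  rw [IsIdempotentElem, ← map_mul, Ideal.Quotient.eq]

theorem hasBooleanQuotient_iff {I : Ideal R} :
    HasBooleanQuotient I ↔ ∀ y : R ⧸ I, y * y = y := by
  rw [Ideal.Quotient.mk_surjective.forall]
  exact forall_congr' fun _ => isIdempotentElem_mk_iff.symm

theorem HasBooleanQuotient.mono {I J : Ideal R} (hI : HasBooleanQuotient I) (hIJ : I ≤ J) :
    HasBooleanQuotient J :=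
  fun x => hIJ (hI x)

variable (R) in
def booleanRadical : Ideal R := sInf {p | p.IsMaximal ∧ HasBooleanQuotient p}

theorem hasBooleanQuotient_booleanRadical : HasBooleanQuotient (booleanRadical R) :=
  fun x => Submodule.mem_sInf.mpr fun _ hp => hp.2 x

theorem isCoprime_booleanRadical {p : Ideal R} (hp : p.IsMaximal) (hnb : ¬ HasBooleanQuotient p) :
    IsCoprime (booleanRadical R) p := by
  rw [Ideal.isCoprime_iff_sup_eq]
  by_contra hne
  exact hnb (hasBooleanQuotient_booleanRadical.mono
    (hp.eq_of_le hne le_sup_right ▸ le_sup_left))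

section Family

variable {ι : Type*} {m : ι → Ideal R}

theorem pairwise_isCoprime_of_isMaximal (hmax : ∀ i, (m i).IsMaximal)
    (hinj : Function.Injective m) : Pairwise (Function.onFun IsCoprime m) := fun i j hij =>
  Ideal.isCoprime_iff_sup_eq.mpr ((hmax i).coprime_of_ne (hmax j) (hinj.ne hij))

theorem exists_idemProdFree_of_not_hasBooleanQuotient [Fintype ι] (hmax : ∀ i, (m i).IsMaximal)
    (hnb : ∀ i, ¬ HasBooleanQuotient (m i)) (hinj : Function.Injective m) :
    ∃ l : List R, l.length = Fintype.card ι ∧ IdemProdFree l := by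
  classical
  choose c hc using fun i => not_forall.mp (hnb i)
  choose u hu using fun i => Ideal.exists_forall_sub_mem_ideal
    (pairwise_isCoprime_of_isMaximal hmax hinj) (Function.update 1 i (c i))
  refine ⟨Finset.univ.toList.map u, by simp, idemProdFree_map_toList u fun s ⟨i, hi⟩ hidem => ?_⟩
  refine hc i (isIdempotentElem_mk_iff.mp ?_)
  have hprod : Ideal.Quotient.mk (m i) (∏ j ∈ s, u j) = Ideal.Quotient.mk (m i) (c i) := by
    rw [map_prod, Finset.prod_eq_single_of_mem i hi fun j _ hji => ?_]
    · exact Ideal.Quotient.eq.mpr (by simpa using hu i i)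
    · rw [← map_one (Ideal.Quotient.mk (m i)), Ideal.Quotient.eq]
      simpa [Ne.symm hji] using hu j i
  exact hprod ▸ hidem.map _

theorem jacobson_bot_eq_booleanRadical_inf
    (hm : Set.range m = {p | p.IsMaximal ∧ ¬ HasBooleanQuotient p}) :
    Ideal.jacobson (⊥ : Ideal R) = booleanRadical R ⊓ ⨅ i, m i := by
  rw [← sInf_range, hm, booleanRadical, ← sInf_union, ← Set.ofPred_or]
  simp only [Ideal.jacobson, bot_le, true_and, ← and_or_left, em, and_true]

noncomputable def quotientJacobsonEquiv [Fintype ι]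
    (hm : Set.range m = {p | p.IsMaximal ∧ ¬ HasBooleanQuotient p}) (hinj : Function.Injective m) :
    R ⧸ Ideal.jacobson (⊥ : Ideal R) ≃+* (R ⧸ booleanRadical R) × ∀ i, R ⧸ m i :=
  have hmem i : (m i).IsMaximal ∧ ¬ HasBooleanQuotient (m i) := hm.subset ⟨i, rfl⟩
  have hcop : IsCoprime (booleanRadical R) (⨅ i, m i) := by
    simpa using Ideal.isCoprime_biInf (s := Finset.univ) fun i _ =>
      isCoprime_booleanRadical (hmem i).1 (hmem i).2
  (Ideal.quotEquivOfEq (jacobson_bot_eq_booleanRadical_inf hm)).trans <|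
    (Ideal.quotientInfEquivQuotientProd _ _ hcop).trans <|
      RingEquiv.prodCongr (RingEquiv.refl _) (Ideal.quotientInfRingEquivPiQuotient m
        (pairwise_isCoprime_of_isMaximal (fun i => (hmem i).1) hinj))

end Family

theorem finite_setOf_not_hasBooleanQuotient (h : EB R ≠ ⊤) :
    {p : Ideal R | p.IsMaximal ∧ ¬ HasBooleanQuotient p}.Finite := by
  by_contra hinf
  refine h (EB_eq_top_of_forall_exists fun n => ?_)
  obtain ⟨T, hT, rfl⟩ := Set.Infinite.exists_subset_card_eq hinf n
  simpa using exists_idemProdFree_of_not_hasBooleanQuotient (m := ((↑) : T → Ideal R))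
    (fun i => (hT i.2).1) (fun i => (hT i.2).2) Subtype.val_injective

theorem two_lt_card_and_isPrimePow {p : Ideal R} [p.IsMaximal] [Finite (R ⧸ p)]
    (hnb : ¬ HasBooleanQuotient p) :
    2 < Nat.card (R ⧸ p) ∧ IsPrimePow (Nat.card (R ⧸ p)) := by
  let := Ideal.Quotient.field p
  have := Fintype.ofFinite (R ⧸ p)
  obtain ⟨y, hy⟩ := not_forall.mp (hasBooleanQuotient_iff.not.mp hnb)
  rw [Nat.card_eq_fintype_card]
  refine ⟨Fintype.two_lt_card_iff.mpr ⟨0, 1, y, zero_ne_one, ?_, ?_⟩, FiniteField.isPrimePow_card _⟩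
  · rintro rfl; simp at hy
  · rintro rfl; simp at hy

end CommRing

end ErdosBurgess

open ErdosBurgess in
theorem stmt_15 (R : Type) [CommRing R] (h : EB R ≠ ⊤) :
    Finite R ∨
    (Finite (Ideal.jacobson (⊥ : Ideal R)) ∧
      ∃ (B : Type) (instB : CommRing B) (t : ℕ) (F : Fin t → Type)
        (instF : ∀ i, Field (F i)),
        Infinite B ∧
        (letI := instB; ∀ x : B, x * x = x) ∧
        (t : ℕ∞) + 1 ≤ EB R ∧
        (∀ i, 2 < Nat.card (F i) ∧ IsPrimePow (Nat.card (F i))) ∧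
        (letI := instB; letI := instF;
          Nonempty ((R ⧸ Ideal.jacobson (⊥ : Ideal R)) ≃+* B × ∀ i, F i))) := by
  have hJ := finite_jacobson_bot_of_EB_ne_top h
  refine or_iff_not_imp_left.mpr fun hR => ⟨hJ, ?_⟩
  obtain ⟨t, m, hm⟩ := (finite_setOf_not_hasBooleanQuotient h).fin_embedding
  have hmem i : (m i).IsMaximal ∧ ¬ HasBooleanQuotient (m i) := hm.subset ⟨i, rfl⟩
  have := fun i => (hmem i).1
  have := fun i => finite_quotient_of_EB_ne_top h (m i)
  let e := quotientJacobsonEquiv hm m.injective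
  refine ⟨R ⧸ booleanRadical R, inferInstance, t, fun i => R ⧸ m i,
    fun i => Ideal.Quotient.field (m i), ?_,
    hasBooleanQuotient_iff.mp hasBooleanQuotient_booleanRadical, ?_,
    fun i => two_lt_card_and_isPrimePow (hmem i).2, ⟨e⟩⟩
  · refine not_finite_iff_infinite.mp fun _ => hR ?_
    have := Finite.of_equiv _ e.symm.toEquiv
    exact Finite.of_ideal_quotient (Ideal.jacobson ⊥)
  · obtain ⟨l, hl, hfree⟩ := exists_idemProdFree_of_not_hasBooleanQuotient
      (fun i => (hmem i).1) (fun i => (hmem i).2) m.injective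
    simpa [hl] using length_add_one_le_EB hfree
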